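/- arXiv:2312.16160 — 2 statements merged into one kernel-verified Lean document; each statement's English description precedes it below -/
import Mathlib

section
/- (Exact coverage of randomized SymmPI.) Let α ∈ (0,1]. Assume Z is 𝒢-distributionally invariant (ρ(G)Z =_d Z) and V : 𝒵 → 𝒵̃ is 𝒢-distributionally equivariant (V(ρ(G)Z) =_d ρ̃(G)V(Z)). For z̃ ∈ 𝒵̃ define Δ_{z̃} := 0 if F'_{z̃}(t_{z̃}) = 0 and Δ_{z̃} := (1 − α − F⁻_{z̃}(t_{z̃}))/F'_{z̃}(t_{z̃}) otherwise, and let U' ~ Unif[0,1] be independent of Z. Then P( ψ(V(Z)) < t_{V(Z)} or ( ψ(V(Z)) = t_{V(Z)} and U' < Δ_{V(Z)} ) ) = 1 − α. -/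
open MeasureTheory ProbabilityTheory

/-- CDF of `ψ(ρ̃(G)z̃)` for `G ~ U`, evaluated at `x ∈ ℝ`. -/
noncomputable def symmPIcdf {𝒢 𝒵t : Type*} [MeasurableSpace 𝒢] (U : Measure 𝒢)
    (ρt : 𝒢 → 𝒵t → 𝒵t) (ψ : 𝒵t → ℝ) (z : 𝒵t) (x : ℝ) : ℝ :=
  (U {g | ψ (ρt g z) ≤ x}).toReal

/-- The SymmPI threshold `t_{z̃} := inf{x ∈ ℝ : F_{z̃}(x) ≥ 1−α}` (equal to `+∞` if this set
is empty), as an extended real number; it is finite whenever `α > 0`. -/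
noncomputable def symmPIthr {𝒢 𝒵t : Type*} [MeasurableSpace 𝒢] (U : Measure 𝒢)
    (ρt : 𝒢 → 𝒵t → 𝒵t) (ψ : 𝒵t → ℝ) (α : ℝ) (z : 𝒵t) : EReal :=
  sInf ((fun x : ℝ => (x : EReal)) '' {x : ℝ | 1 - α ≤ symmPIcdf U ρt ψ z x})

/-- The CDF of `ψ(ρ̃(G)z̃)`, `G ~ U`, extended to `EReal` arguments. -/
noncomputable def symmPIcdfE {𝒢 𝒵t : Type*} [MeasurableSpace 𝒢] (U : Measure 𝒢)
    (ρt : 𝒢 → 𝒵t → 𝒵t) (ψ : 𝒵t → ℝ) (z : 𝒵t) (t : EReal) : ℝ :=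
  (U {g | (ψ (ρt g z) : EReal) ≤ t}).toReal

/-- The left limit `F⁻_{z̃}(t) = lim_{y↑t} F_{z̃}(y)` of the CDF. -/
noncomputable def symmPIcdfLeft {𝒢 𝒵t : Type*} [MeasurableSpace 𝒢] (U : Measure 𝒢)
    (ρt : 𝒢 → 𝒵t → 𝒵t) (ψ : 𝒵t → ℝ) (z : 𝒵t) (t : EReal) : ℝ :=
  sSup (symmPIcdfE U ρt ψ z '' Set.Iio t)

/-- The jump `F'_{z̃}(t) = F_{z̃}(t) − lim_{y↑t} F_{z̃}(y)` of the CDF at `t`. -/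
noncomputable def symmPIjump {𝒢 𝒵t : Type*} [MeasurableSpace 𝒢] (U : Measure 𝒢)
    (ρt : 𝒢 → 𝒵t → 𝒵t) (ψ : 𝒵t → ℝ) (z : 𝒵t) (t : EReal) : ℝ :=
  symmPIcdfE U ρt ψ z t - symmPIcdfLeft U ρt ψ z t

/-- The randomization probability `Δ_{z̃}`: `0` if `F'_{z̃}(t_{z̃}) = 0`, and
`(1 − α − F⁻_{z̃}(t_{z̃}))/F'_{z̃}(t_{z̃})` otherwise. -/
noncomputable def symmPIDelta {𝒢 𝒵t : Type*} [MeasurableSpace 𝒢] (U : Measure 𝒢)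
    (ρt : 𝒢 → 𝒵t → 𝒵t) (ψ : 𝒵t → ℝ) (α : ℝ) (z : 𝒵t) : ℝ :=
  if symmPIjump U ρt ψ z (symmPIthr U ρt ψ α z) = 0 then 0
  else (1 - α - symmPIcdfLeft U ρt ψ z (symmPIthr U ρt ψ α z)) /
    symmPIjump U ρt ψ z (symmPIthr U ρt ψ α z)

/-! Conditionally on `V(Z) = w`, the event has probability
`1{ψ w < t_w} + Δ_w · 1{ψ w = t_w}`. Since `V(Z) =_d ρ̃(G)V(Z)` with `G ~ U` independent of `Z`,
the average of this weight over the law of `V(Z)` equals its average over the orbits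
`g ↦ ρ̃(g)w`, `g ~ U`. A left-invariant probability measure is also right-invariant (Fubini
against its image under inversion), so `t` and `Δ` are constant along orbits and the orbit
average is `F⁻_w(t_w) + Δ_w F'_w(t_w)`, which is `1 − α` by the choice of `Δ_w`. -/

open scoped ENNReal

section RightInvariance

variable {G : Type*} [Group G] [MeasurableSpace G] [MeasurableMul G] [MeasurableInv G]
  (μ : Measure G) [IsProbabilityMeasure μ] [μ.IsMulLeftInvariant]

-- Multiplication need not be measurable for the product σ-algebra (`G` need not be second
-- countable), so joint measurability of `p ↦ p.1 * p.2 ∈ A` is assumed set by set.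
theorem measure_eq_inv_apply_of_measurableSet_mul {A : Set G}
    (hA : MeasurableSet {p : G × G | p.1 * p.2 ∈ A}) : μ A = μ.inv A := by
  have : IsProbabilityMeasure μ.inv :=
    Measure.isProbabilityMeasure_map measurable_inv.aemeasurable
  calc μ A = ∫⁻ h, μ ((fun k => h * k) ⁻¹' A) ∂μ.inv := by simp
    _ = (μ.inv.prod μ) {p : G × G | p.1 * p.2 ∈ A} := (Measure.prod_apply hA).symm
    _ = ∫⁻ k, μ.inv ((fun h => h * k) ⁻¹' A) ∂μ := Measure.prod_apply_symm hA
    _ = μ.inv A := by simp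

theorem measure_preimage_mul_right_of_measurableSet_mul {A : Set G}
    (hA : MeasurableSet {p : G × G | p.1 * p.2 ∈ A}) (g : G) :
    μ ((fun h => h * g) ⁻¹' A) = μ A := by
  have hAg : MeasurableSet {p : G × G | p.1 * p.2 ∈ (fun h => h * g) ⁻¹' A} := by
    simp only [Set.mem_preimage, mul_assoc]
    exact hA.preimage (measurable_fst.prodMk (measurable_snd.mul_const g))
  rw [measure_eq_inv_apply_of_measurableSet_mul μ hAg, measure_preimage_mul_right,
    measure_eq_inv_apply_of_measurableSet_mul μ hA]

end RightInvariance

theorem mem_Icc_and_add_mul_eq_of_eq_ite_div {L J c Δ : ℝ} (hJ : 0 ≤ J) (hLc : L ≤ c)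
    (hcLJ : c ≤ L + J) (hΔ : Δ = if J = 0 then 0 else (c - L) / J) :
    Δ ∈ Set.Icc 0 1 ∧ L + Δ * J = c := by
  rcases hJ.eq_or_lt with rfl | hJ
  · simp only [if_true] at hΔ
    subst hΔ
    exact ⟨⟨le_rfl, zero_le_one⟩, by linarith⟩
  · rw [if_neg hJ.ne'] at hΔ
    subst hΔ
    refine ⟨⟨div_nonneg (by linarith) hJ.le, (div_le_one hJ).2 (by linarith)⟩, ?_⟩
    rw [div_mul_cancel₀ _ hJ.ne']
    ring

theorem exists_isLeast_le_cdf (ν : Measure ℝ) [IsProbabilityMeasure ν] {c : ℝ} (hc0 : 0 < c)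
    (hc1 : c < 1) : ∃ t, IsLeast {x | c ≤ cdf ν x} t := by
  set S := {x | c ≤ cdf ν x}
  obtain ⟨x₁, hx₁⟩ := ((tendsto_cdf_atTop ν).eventually_const_lt hc1).exists
  obtain ⟨x₀, hx₀⟩ := Filter.eventually_atBot.1 ((tendsto_cdf_atBot ν).eventually_lt_const hc0)
  have hne : S.Nonempty := ⟨x₁, hx₁.le⟩
  have hbdd : BddBelow S := ⟨x₀, fun x hx => not_lt.1 fun h => (hx₀ x h.le).not_ge hx⟩
  refine ⟨sInf S, ?_, fun x hx => csInf_le hbdd hx⟩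
  refine ge_of_tendsto ((cdf ν).right_continuous _ |>.mono Set.Ioi_subset_Ici_self)
    (eventually_nhdsWithin_of_forall fun x hx => ?_)
  obtain ⟨s, hs, hsx⟩ := exists_lt_of_csInf_lt hne hx
  exact hs.trans (monotone_cdf ν hsx.le)

theorem measure_preimage_prodMk_eq_lintegral_of_indepFun {Ω 𝒳 𝒴 : Type*} [MeasurableSpace Ω]
    [MeasurableSpace 𝒳] [MeasurableSpace 𝒴] {P : Measure Ω} [IsFiniteMeasure P] {X : Ω → 𝒳}
    {Y : Ω → 𝒴} (hX : Measurable X) (hY : Measurable Y) (hXY : IndepFun X Y P)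
    {C : Set (𝒳 × 𝒴)} (hC : MeasurableSet C) :
    P ((fun ω => (X ω, Y ω)) ⁻¹' C) = ∫⁻ x, P.map Y (Prod.mk x ⁻¹' C) ∂P.map X := by
  rw [← Measure.map_apply (hX.prodMk hY) hC,
    (indepFun_iff_map_prod_eq_prod_map_map hX.aemeasurable hY.aemeasurable).1 hXY,
    Measure.prod_apply hC]

theorem restrict_Icc_setOf_lt_or_eq_and_lt (r : ℝ) (t : EReal) {δ : ℝ} (hδ : δ ∈ Set.Icc 0 1) :
    volume.restrict (Set.Icc 0 1) {u : ℝ | (r : EReal) < t ∨ ((r : EReal) = t ∧ u < δ)} =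
      {x : ℝ | (x : EReal) < t}.indicator 1 r +
        {x : ℝ | (x : EReal) = t}.indicator (fun _ => ENNReal.ofReal δ) r := by
  by_cases hlt : (r : EReal) < t
  · simp [hlt, hlt.ne]
  by_cases heq : (r : EReal) = t
  · have hIco : Set.Iio δ ∩ Set.Icc 0 1 = Set.Ico 0 δ := by
      ext u; simp only [Set.mem_inter_iff, Set.mem_Iio, Set.mem_Icc, Set.mem_Ico]
      constructor
      · rintro ⟨h1, h2, -⟩; exact ⟨h2, h1⟩
      · rintro ⟨h1, h2⟩; exact ⟨h2, h1, h2.le.trans hδ.2⟩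
    have hset : {u : ℝ | (r : EReal) < t ∨ ((r : EReal) = t ∧ u < δ)} = Set.Iio δ := by
      ext u; simp [heq]
    rw [hset, Measure.restrict_apply measurableSet_Iio, hIco, Real.volume_Ico, sub_zero]
    simp [heq]
  · simp [hlt, heq]

theorem map_eq_map_act_prod_of_distribEquivariant {Ω 𝒢 𝒵 𝒵t : Type*} [MeasurableSpace Ω]
    [MeasurableSpace 𝒢] [MeasurableSpace 𝒵] [MeasurableSpace 𝒵t] {P : Measure Ω}
    [IsProbabilityMeasure P] {U : Measure 𝒢} {ρ : 𝒢 → 𝒵 → 𝒵} {ρt : 𝒢 → 𝒵t → 𝒵t} {V : 𝒵 → 𝒵t}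
    {Zv : Ω → 𝒵} {Gv : Ω → 𝒢}
    (hρ_meas : Measurable (fun p : 𝒢 × 𝒵 => ρ p.1 p.2))
    (hρt_meas : Measurable (fun p : 𝒢 × 𝒵t => ρt p.1 p.2))
    (hV : Measurable V) (hZ : Measurable Zv) (hG : Measurable Gv)
    (hGlaw : Measure.map Gv P = U) (hindep : IndepFun Gv Zv P)
    (hinv : Measure.map (fun ω => ρ (Gv ω) (Zv ω)) P = Measure.map Zv P)
    (hequiv : Measure.map (fun ω => V (ρ (Gv ω) (Zv ω))) P
        = Measure.map (fun ω => ρt (Gv ω) (V (Zv ω))) P) :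
    P.map (fun ω => V (Zv ω)) =
      (U.prod (P.map fun ω => V (Zv ω))).map (fun p => ρt p.1 p.2) := by
  have hW : Measurable fun ω => V (Zv ω) := hV.comp hZ
  calc P.map (fun ω => V (Zv ω)) = (P.map Zv).map V := (Measure.map_map hV hZ).symm
    _ = (P.map fun ω => ρ (Gv ω) (Zv ω)).map V := by rw [hinv]
    _ = P.map (fun ω => ρt (Gv ω) (V (Zv ω))) :=
      (Measure.map_map hV (hρ_meas.comp (hG.prodMk hZ))).trans hequiv
    _ = (P.map fun ω => (Gv ω, V (Zv ω))).map (fun p => ρt p.1 p.2) :=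
      (Measure.map_map hρt_meas (hG.prodMk hW)).symm
    _ = _ := by
      rw [(indepFun_iff_map_prod_eq_prod_map_map hG.aemeasurable hW.aemeasurable).1
        (hindep.comp measurable_id hV), hGlaw]

section OrbitInvariance

variable {𝒢 𝒵t : Type*} [Group 𝒢] [MeasurableSpace 𝒢] [MeasurableMul 𝒢] [MeasurableInv 𝒢]
  [MeasurableSpace 𝒵t] {U : Measure 𝒢} [IsProbabilityMeasure U] [U.IsMulLeftInvariant]
  {ρt : 𝒢 → 𝒵t → 𝒵t} {ψ : 𝒵t → ℝ}
  (hρt_mul : ∀ g g' : 𝒢, ρt (g * g') = ρt g ∘ ρt g')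
  (hρt_meas : Measurable (fun p : 𝒢 × 𝒵t => ρt p.1 p.2))
  (hψρ : Measurable (fun p : 𝒢 × 𝒵t => ψ (ρt p.1 p.2)))
include hρt_mul hρt_meas hψρ

theorem measure_score_act_mem (g₀ : 𝒢) (z : 𝒵t) {S : Set ℝ} (hS : MeasurableSet S) :
    U {g | ψ (ρt g (ρt g₀ z)) ∈ S} = U {g | ψ (ρt g z) ∈ S} := by
  have hmul : ∀ g g' : 𝒢, ρt (g * g') z = ρt g (ρt g' z) := fun g g' => by rw [hρt_mul]; rfl
  have hA : MeasurableSet {p : 𝒢 × 𝒢 | p.1 * p.2 ∈ {g | ψ (ρt g z) ∈ S}} := by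
    simp only [Set.mem_ofPred_eq, hmul]
    exact hψρ.comp
      (measurable_fst.prodMk (hρt_meas.comp (measurable_snd.prodMk measurable_const))) hS
  simpa only [Set.preimage_ofPred_eq, hmul] using
    measure_preimage_mul_right_of_measurableSet_mul U hA g₀

theorem symmPIcdf_act (g₀ : 𝒢) (z : 𝒵t) :
    symmPIcdf U ρt ψ (ρt g₀ z) = symmPIcdf U ρt ψ z :=
  funext fun _ => congrArg ENNReal.toReal
    (measure_score_act_mem hρt_mul hρt_meas hψρ g₀ z measurableSet_Iic)

theorem symmPIcdfE_act (g₀ : 𝒢) (z : 𝒵t) :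
    symmPIcdfE U ρt ψ (ρt g₀ z) = symmPIcdfE U ρt ψ z :=
  funext fun _ => congrArg ENNReal.toReal
    (measure_score_act_mem hρt_mul hρt_meas hψρ g₀ z
      (measurable_coe_real_ereal measurableSet_Iic))

theorem symmPIthr_act (α : ℝ) (g₀ : 𝒢) (z : 𝒵t) :
    symmPIthr U ρt ψ α (ρt g₀ z) = symmPIthr U ρt ψ α z := by
  rw [symmPIthr, symmPIthr, symmPIcdf_act hρt_mul hρt_meas hψρ]

theorem symmPIDelta_act (α : ℝ) (g₀ : 𝒢) (z : 𝒵t) :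
    symmPIDelta U ρt ψ α (ρt g₀ z) = symmPIDelta U ρt ψ α z := by
  unfold symmPIDelta symmPIjump symmPIcdfLeft
  rw [symmPIthr_act hρt_mul hρt_meas hψρ, symmPIcdfE_act hρt_mul hρt_meas hψρ]

end OrbitInvariance

noncomputable def symmPIlaw {𝒢 𝒵t : Type*} [MeasurableSpace 𝒢] (U : Measure 𝒢)
    (ρt : 𝒢 → 𝒵t → 𝒵t) (ψ : 𝒵t → ℝ) (z : 𝒵t) : Measure ℝ :=
  U.map fun g => ψ (ρt g z)

section Quantile

variable {𝒢 𝒵t : Type*} [MeasurableSpace 𝒢] {U : Measure 𝒢} {ρt : 𝒢 → 𝒵t → 𝒵t} {ψ : 𝒵t → ℝ}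
  {z : 𝒵t}

theorem symmPIcdfE_coe (x : ℝ) : symmPIcdfE U ρt ψ z x = symmPIcdf U ρt ψ z x := by
  simp only [symmPIcdfE, symmPIcdf, EReal.coe_le_coe_iff]

theorem symmPIcdfE_bot : symmPIcdfE U ρt ψ z ⊥ = 0 := by
  simp [symmPIcdfE]

theorem symmPIthr_of_one : symmPIthr U ρt ψ 1 z = ⊥ := by
  refine (EReal.eq_bot_iff_forall_lt _).2 fun y => ?_
  refine lt_of_le_of_lt (sInf_le ⟨y - 1, ?_, rfl⟩) (EReal.coe_lt_coe_iff.2 (by linarith))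
  simp [symmPIcdf]

theorem symmPIDelta_of_one : symmPIDelta U ρt ψ 1 z = 0 := by
  simp [symmPIDelta, symmPIjump, symmPIcdfLeft, symmPIthr_of_one, symmPIcdfE_bot]

theorem symmPIthr_eq_coe {α t : ℝ} (ht : IsLeast {x | 1 - α ≤ symmPIcdf U ρt ψ z x} t) :
    symmPIthr U ρt ψ α z = t :=
  (EReal.coe_strictMono.map_isLeast.2 ht).csInf_eq

variable [IsProbabilityMeasure U] (hφ : Measurable fun g => ψ (ρt g z))
include hφ

theorem isProbabilityMeasure_symmPIlaw : IsProbabilityMeasure (symmPIlaw U ρt ψ z) :=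
  Measure.isProbabilityMeasure_map hφ.aemeasurable

theorem symmPIcdf_eq_cdf :
    symmPIcdf U ρt ψ z = cdf (symmPIlaw U ρt ψ z) := by
  have := isProbabilityMeasure_symmPIlaw (U := U) hφ
  funext x
  rw [cdf_eq_real, measureReal_def, symmPIlaw, Measure.map_apply hφ measurableSet_Iic]
  rfl

theorem symmPIcdfLeft_coe (x : ℝ) :
    symmPIcdfLeft U ρt ψ z x = Function.leftLim (cdf (symmPIlaw U ρt ψ z)) x := by
  have hmono := monotone_cdf (symmPIlaw U ρt ψ z)
  have hIio : Set.Iio (x : EReal) = insert ⊥ (((↑) : ℝ → EReal) '' Set.Iio x) := by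
    ext y
    induction y using EReal.rec <;> simp
  have hbdd : BddAbove (cdf (symmPIlaw U ρt ψ z) '' Set.Iio x) :=
    ⟨1, Set.forall_mem_image.2 fun _ _ => cdf_le_one _ _⟩
  have hpos : 0 ≤ Function.leftLim (cdf (symmPIlaw U ρt ψ z)) x :=
    (cdf_nonneg _ (x - 1)).trans (hmono.le_leftLim (sub_one_lt x))
  rw [symmPIcdfLeft, hIio, Set.image_insert_eq, Set.image_image, symmPIcdfE_bot]
  simp only [symmPIcdfE_coe, symmPIcdf_eq_cdf hφ]
  rw [csSup_insert hbdd (Set.nonempty_Iio.image _), ← hmono.leftLim_eq_sSup, max_eq_right hpos]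

theorem symmPIjump_coe (x : ℝ) : symmPIjump U ρt ψ z x = (symmPIlaw U ρt ψ z).real {x} := by
  have := isProbabilityMeasure_symmPIlaw (U := U) hφ
  have hJ : symmPIlaw U ρt ψ z {x} = (cdf (symmPIlaw U ρt ψ z)).measure {x} := by
    rw [measure_cdf]
  rw [symmPIjump, symmPIcdfE_coe, symmPIcdfLeft_coe hφ, symmPIcdf_eq_cdf hφ, measureReal_def,
    hJ, StieltjesFunction.measure_singleton,
    ENNReal.toReal_ofReal (sub_nonneg.2 ((monotone_cdf _).leftLim_le le_rfl))]

theorem symmPIDelta_mem_Icc_and_coverage {α : ℝ} (hα : α ∈ Set.Ioc 0 1) :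
    symmPIDelta U ρt ψ α z ∈ Set.Icc 0 1 ∧
      symmPIlaw U ρt ψ z {r | (r : EReal) < symmPIthr U ρt ψ α z} +
        ENNReal.ofReal (symmPIDelta U ρt ψ α z) *
          symmPIlaw U ρt ψ z {r | (r : EReal) = symmPIthr U ρt ψ α z} =
      ENNReal.ofReal (1 - α) := by
  rcases hα.2.eq_or_lt with rfl | hα1
  · simp [symmPIthr_of_one, symmPIDelta_of_one]
  have := isProbabilityMeasure_symmPIlaw (U := U) hφ
  set ν := symmPIlaw U ρt ψ z
  obtain ⟨t, ht⟩ := exists_isLeast_le_cdf ν (sub_pos.2 hα1) (by linarith [hα.1])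
  rw [← symmPIcdf_eq_cdf hφ] at ht
  have hthr := symmPIthr_eq_coe ht
  rw [symmPIcdf_eq_cdf hφ] at ht
  have hL : Function.leftLim (cdf ν) t ≤ 1 - α :=
    le_of_tendsto ((monotone_cdf ν).tendsto_leftLim t) <| eventually_nhdsWithin_of_forall
      fun x hx => not_lt.1 fun h => (not_le.2 (Set.mem_Iio.1 hx)) (ht.2 h.le)
  have hF : cdf ν t = Function.leftLim (cdf ν) t + ν.real {t} := by
    rw [← symmPIjump_coe hφ, symmPIjump, symmPIcdfE_coe, symmPIcdfLeft_coe hφ,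
      symmPIcdf_eq_cdf hφ]
    ring
  obtain ⟨hΔ, hsum⟩ := mem_Icc_and_add_mul_eq_of_eq_ite_div (Δ := symmPIDelta U ρt ψ α z)
    (J := ν.real {t}) measureReal_nonneg hL (by rw [← hF]; exact ht.1)
    (by rw [symmPIDelta, hthr, symmPIjump_coe hφ, symmPIcdfLeft_coe hφ])
  have hIio : ν (Set.Iio t) = ENNReal.ofReal (Function.leftLim (cdf ν) t) := by
    have := (cdf ν).measure_Iio (tendsto_cdf_atBot ν) t
    rwa [measure_cdf, sub_zero] at this
  have hL0 : 0 ≤ Function.leftLim (cdf ν) t :=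
    (cdf_nonneg ν (t - 1)).trans ((monotone_cdf ν).le_leftLim (sub_one_lt t))
  refine ⟨hΔ, ?_⟩
  simp only [hthr, EReal.coe_lt_coe_iff, EReal.coe_eq_coe_iff]
  change ν (Set.Iio t) + _ * ν {t} = _
  rw [hIio, ← ofReal_measureReal,
    ← ENNReal.ofReal_mul hΔ.1, ← ENNReal.ofReal_add hL0 (mul_nonneg hΔ.1 measureReal_nonneg),
    hsum]

end Quantile

noncomputable def symmPIcoverSet {𝒢 𝒵t : Type*} [MeasurableSpace 𝒢] (U : Measure 𝒢)
    (ρt : 𝒢 → 𝒵t → 𝒵t) (ψ : 𝒵t → ℝ) (α : ℝ) : Set (𝒵t × ℝ) :=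
  {p | (ψ p.1 : EReal) < symmPIthr U ρt ψ α p.1 ∨
    ((ψ p.1 : EReal) = symmPIthr U ρt ψ α p.1 ∧ p.2 < symmPIDelta U ρt ψ α p.1)}

section Coverage

variable {𝒢 𝒵t : Type*} [MeasurableSpace 𝒢] [MeasurableSpace 𝒵t] {U : Measure 𝒢}
  {ρt : 𝒢 → 𝒵t → 𝒵t} {ψ : 𝒵t → ℝ} {α : ℝ}

theorem measurableSet_symmPIcoverSet (hψ : Measurable ψ)
    (ht_meas : Measurable (fun z : 𝒵t => symmPIthr U ρt ψ α z))
    (hΔ_meas : Measurable (fun z : 𝒵t => symmPIDelta U ρt ψ α z)) :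
    MeasurableSet (symmPIcoverSet U ρt ψ α) := by
  have hψ' : Measurable fun p : 𝒵t × ℝ => (ψ p.1 : EReal) :=
    measurable_coe_real_ereal.comp (hψ.comp measurable_fst)
  have ht' : Measurable fun p : 𝒵t × ℝ => symmPIthr U ρt ψ α p.1 := ht_meas.comp measurable_fst
  exact (measurableSet_lt hψ' ht').union ((measurableSet_eq_fun hψ' ht').inter
    (measurableSet_lt measurable_snd (hΔ_meas.comp measurable_fst)))

theorem lintegral_restrict_Icc_symmPIcoverSet_act [Group 𝒢] [MeasurableMul 𝒢] [MeasurableInv 𝒢]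
    [IsProbabilityMeasure U] [U.IsMulLeftInvariant]
    (hρt_mul : ∀ g g' : 𝒢, ρt (g * g') = ρt g ∘ ρt g')
    (hρt_meas : Measurable (fun p : 𝒢 × 𝒵t => ρt p.1 p.2))
    (hψρ : Measurable (fun p : 𝒢 × 𝒵t => ψ (ρt p.1 p.2))) (hα : α ∈ Set.Ioc 0 1) (w : 𝒵t) :
    ∫⁻ g, volume.restrict (Set.Icc 0 1) (Prod.mk (ρt g w) ⁻¹' symmPIcoverSet U ρt ψ α) ∂U =
      ENNReal.ofReal (1 - α) := by
  have hφ : Measurable fun g => ψ (ρt g w) := hψρ.comp (measurable_id.prodMk measurable_const)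
  obtain ⟨hΔ, hcover⟩ := symmPIDelta_mem_Icc_and_coverage (U := U) hφ hα
  set t := symmPIthr U ρt ψ α w
  have hlt : MeasurableSet {x : ℝ | (x : EReal) < t} :=
    measurableSet_lt measurable_coe_real_ereal measurable_const
  have heq : MeasurableSet {x : ℝ | (x : EReal) = t} :=
    measurable_coe_real_ereal (measurableSet_singleton t)
  have hslice : ∀ g, Prod.mk (ρt g w) ⁻¹' symmPIcoverSet U ρt ψ α =
      {u : ℝ | (ψ (ρt g w) : EReal) < t ∨
        ((ψ (ρt g w) : EReal) = t ∧ u < symmPIDelta U ρt ψ α w)} := by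
    intro g
    simp only [symmPIcoverSet, Set.preimage_ofPred_eq, symmPIthr_act hρt_mul hρt_meas hψρ,
      symmPIDelta_act hρt_mul hρt_meas hψρ, t]
  let f : ℝ → ℝ≥0∞ := fun r => {x : ℝ | (x : EReal) < t}.indicator 1 r +
    {x : ℝ | (x : EReal) = t}.indicator (fun _ => ENNReal.ofReal (symmPIDelta U ρt ψ α w)) r
  have hf : Measurable f := (measurable_one.indicator hlt).add (measurable_const.indicator heq)
  calc ∫⁻ g, volume.restrict (Set.Icc 0 1) (Prod.mk (ρt g w) ⁻¹' symmPIcoverSet U ρt ψ α) ∂U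
      = ∫⁻ g, f (ψ (ρt g w)) ∂U := by
        simp only [hslice, restrict_Icc_setOf_lt_or_eq_and_lt _ _ hΔ, f]
    _ = ∫⁻ r, f r ∂symmPIlaw U ρt ψ w := (lintegral_map hf hφ).symm
    _ = ENNReal.ofReal (1 - α) := by
      rw [lintegral_add_left (measurable_one.indicator hlt), lintegral_indicator_one hlt,
        lintegral_indicator_const heq, hcover]

end Coverage

theorem stmt6_general
    {Ω 𝒢 𝒵 𝒵t : Type*} [MeasurableSpace Ω] [MeasurableSpace 𝒢] [MeasurableSpace 𝒵]
    [MeasurableSpace 𝒵t]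
    [Group 𝒢] [TopologicalSpace 𝒢] [IsTopologicalGroup 𝒢]
    [BorelSpace 𝒢]
    (P : Measure Ω) [IsProbabilityMeasure P]
    (U : Measure 𝒢) [IsProbabilityMeasure U]
    (hU : ∀ g : 𝒢, Measure.map (fun h => g * h) U = U)
    (ρ : 𝒢 → 𝒵 → 𝒵)
    (hρ_meas : Measurable (fun p : 𝒢 × 𝒵 => ρ p.1 p.2))
    (ρt : 𝒢 → 𝒵t → 𝒵t)
    (hρt_mul : ∀ g g' : 𝒢, ρt (g * g') = ρt g ∘ ρt g')
    (hρt_meas : Measurable (fun p : 𝒢 × 𝒵t => ρt p.1 p.2))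
    (V : 𝒵 → 𝒵t) (hV : Measurable V)
    (ψ : 𝒵t → ℝ) (hψ : Measurable ψ)
    (hψρ : Measurable (fun p : 𝒢 × 𝒵t => ψ (ρt p.1 p.2)))
    (α : ℝ) (hα : α ∈ Set.Ioc (0 : ℝ) 1)
    (ht_meas : Measurable (fun z : 𝒵t => symmPIthr U ρt ψ α z))
    (hΔ_meas : Measurable (fun z : 𝒵t => symmPIDelta U ρt ψ α z))
    (Zv : Ω → 𝒵) (Gv : Ω → 𝒢) (hZ : Measurable Zv) (hG : Measurable Gv)
    (hGlaw : Measure.map Gv P = U)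
    (hindep : IndepFun Gv Zv P)
    (hinv : Measure.map (fun ω => ρ (Gv ω) (Zv ω)) P = Measure.map Zv P)
    (hequiv : Measure.map (fun ω => V (ρ (Gv ω) (Zv ω))) P
        = Measure.map (fun ω => ρt (Gv ω) (V (Zv ω))) P)
    (U' : Ω → ℝ) (hU'meas : Measurable U')
    (hU'law : Measure.map U' P = volume.restrict (Set.Icc (0 : ℝ) 1))
    (hU'indep : IndepFun U' Zv P) :
    (P {ω | (ψ (V (Zv ω)) : EReal) < symmPIthr U ρt ψ α (V (Zv ω)) ∨
        ((ψ (V (Zv ω)) : EReal) = symmPIthr U ρt ψ α (V (Zv ω)) ∧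
          U' ω < symmPIDelta U ρt ψ α (V (Zv ω)))}).toReal = 1 - α := by
  have : U.IsMulLeftInvariant := ⟨hU⟩
  have hW : Measurable fun ω => V (Zv ω) := hV.comp hZ
  set μ := P.map fun ω => V (Zv ω)
  have hμ : μ = (U.prod μ).map (fun p => ρt p.1 p.2) := map_eq_map_act_prod_of_distribEquivariant
    hρ_meas hρt_meas hV hZ hG hGlaw hindep hinv hequiv
  have hC := measurableSet_symmPIcoverSet hψ ht_meas hΔ_meas
  set C := symmPIcoverSet U ρt ψ α
  have hslice_meas :=
    measurable_measure_prodMk_left (ν := volume.restrict (Set.Icc (0 : ℝ) 1)) hC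
  suffices P ((fun ω => (V (Zv ω), U' ω)) ⁻¹' C) = ENNReal.ofReal (1 - α) by
    rw [← ENNReal.toReal_ofReal (sub_nonneg.2 hα.2), ← this]
    rfl
  calc _ = ∫⁻ w, volume.restrict (Set.Icc 0 1) (Prod.mk w ⁻¹' C) ∂μ := by
        rw [measure_preimage_prodMk_eq_lintegral_of_indepFun hW hU'meas
          (hU'indep.symm.comp hV measurable_id) hC, hU'law]
    _ = ∫⁻ w, volume.restrict (Set.Icc 0 1) (Prod.mk w ⁻¹' C) ∂(U.prod μ).map
          (fun p => ρt p.1 p.2) := by rw [← hμ]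
    _ = ∫⁻ w, ∫⁻ g, volume.restrict (Set.Icc 0 1) (Prod.mk (ρt g w) ⁻¹' C) ∂U ∂μ := by
        rw [lintegral_map hslice_meas hρt_meas]
        exact lintegral_prod_symm' _ (hslice_meas.comp hρt_meas)
    _ = ∫⁻ _, ENNReal.ofReal (1 - α) ∂μ := lintegral_congr fun w =>
        lintegral_restrict_Icc_symmPIcoverSet_act hρt_mul hρt_meas hψρ hα w
    _ = ENNReal.ofReal (1 - α) := by simp [μ, Measure.map_apply hW MeasurableSet.univ]

/-- exact coverage of randomized SymmPI: with `α ∈ (0,1]`, distributional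
invariance of `Z`, distributional equivariance of `V`, and `U' ~ Unif[0,1]` independent
of `Z`, `P(ψ(V(Z)) < t_{V(Z)} or (ψ(V(Z)) = t_{V(Z)} and U' < Δ_{V(Z)})) = 1 − α`. -/
theorem stmt6
    {Ω 𝒢 𝒵 𝒵t : Type*} [MeasurableSpace Ω] [MeasurableSpace 𝒢] [MeasurableSpace 𝒵]
    [MeasurableSpace 𝒵t]
    [Group 𝒢] [TopologicalSpace 𝒢] [IsTopologicalGroup 𝒢] [CompactSpace 𝒢] [T2Space 𝒢]
    [BorelSpace 𝒢]
    (P : Measure Ω) [IsProbabilityMeasure P]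
    (U : Measure 𝒢) [IsProbabilityMeasure U]
    (hU : ∀ g : 𝒢, Measure.map (fun h => g * h) U = U)
    (ρ : 𝒢 → 𝒵 → 𝒵)
    (hρ_one : ρ 1 = id)
    (hρ_mul : ∀ g g' : 𝒢, ρ (g * g') = ρ g ∘ ρ g')
    (hρ_meas : Measurable (fun p : 𝒢 × 𝒵 => ρ p.1 p.2))
    (ρt : 𝒢 → 𝒵t → 𝒵t)
    (hρt_one : ρt 1 = id)
    (hρt_mul : ∀ g g' : 𝒢, ρt (g * g') = ρt g ∘ ρt g')
    (hρt_meas : Measurable (fun p : 𝒢 × 𝒵t => ρt p.1 p.2))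
    (V : 𝒵 → 𝒵t) (hV : Measurable V)
    (ψ : 𝒵t → ℝ) (hψ : Measurable ψ)
    (hψρ : Measurable (fun p : 𝒢 × 𝒵t => ψ (ρt p.1 p.2)))
    (α : ℝ) (hα : α ∈ Set.Ioc (0 : ℝ) 1)
    (ht_meas : Measurable (fun z : 𝒵t => symmPIthr U ρt ψ α z))
    (hΔ_meas : Measurable (fun z : 𝒵t => symmPIDelta U ρt ψ α z))
    (Zv : Ω → 𝒵) (Gv : Ω → 𝒢) (hZ : Measurable Zv) (hG : Measurable Gv)
    (hGlaw : Measure.map Gv P = U)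
    (hindep : IndepFun Gv Zv P)
    (hinv : Measure.map (fun ω => ρ (Gv ω) (Zv ω)) P = Measure.map Zv P)
    (hequiv : Measure.map (fun ω => V (ρ (Gv ω) (Zv ω))) P
        = Measure.map (fun ω => ρt (Gv ω) (V (Zv ω))) P)
    (U' : Ω → ℝ) (hU'meas : Measurable U')
    (hU'law : Measure.map U' P = volume.restrict (Set.Icc (0 : ℝ) 1))
    (hU'indep : IndepFun U' Zv P) :
    (P {ω | (ψ (V (Zv ω)) : EReal) < symmPIthr U ρt ψ α (V (Zv ω)) ∨
        ((ψ (V (Zv ω)) : EReal) = symmPIthr U ρt ψ α (V (Zv ω)) ∧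
          U' ω < symmPIDelta U ρt ψ α (V (Zv ω)))}).toReal = 1 - α :=
  stmt6_general P U hU ρ hρ_meas ρt hρt_mul hρt_meas V hV ψ hψ hψρ α hα ht_meas hΔ_meas Zv Gv hZ hG
    hGlaw hindep hinv hequiv U' hU'meas hU'law hU'indep
end

section
/- (Coverage under distribution shift.) Let Z be an arbitrary random element of 𝒵 (not assumed distributionally invariant) and V : 𝒵 → 𝒵̃ an arbitrary measurable map. Define ν(z̃) := ψ(z̃) − t_{z̃} and Δ := ∫_𝒢 TV( ν(V(Z)), ν(ρ̃(g)V(Z)) ) dU(g), where TV(X,Y) := sup over Borel sets A ⊆ ℝ of |P(X ∈ A) − P(Y ∈ A)| (this Haar-averaged Δ coincides with the average of the same total-variation terms over the invariant measure on the cosets of H := {h ∈ 𝒢 : ψ(ρ̃(h)z̃) = ψ(z̃) for all z̃}, since g ↦ ν∘ρ̃(g) is constant on cosets Hg). Then −Δ ≤ P(ψ(V(Z)) ≤ t_{V(Z)}) − (1 − α) ≤ Δ + E[F'_{V(Z)}(t_{V(Z)})]. -/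
open MeasureTheory ProbabilityTheory

/-- Total variation distance between the laws of two random elements, as the supremum over
measurable sets of the absolute difference of probabilities. -/
noncomputable def TVdist {β : Type*} [MeasurableSpace β] (μ ν : Measure β) : ℝ :=
  ⨆ A : {A : Set β // MeasurableSet A}, |(μ A.1).toReal - (ν A.1).toReal|

/-!
A left-invariant probability measure `U` is also invariant under inversion on the sets
`{h | ρ̃(h) z̃ ∈ S}` (Fubini on `𝒢 × 𝒢`), so the law of `ρ̃(G) z̃` is constant along orbits, and
with it the CDF `F_{z̃}` and the threshold `t_{z̃}`. Hence the event `ψ(ρ̃(g)V(Z)) ≤ t_{V(Z)}` is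
`ν(ρ̃(g)V(Z)) ≤ 0`, whose probability is within `TV(ν(V(Z)), ν(ρ̃(g)V(Z)))` of the coverage
`P(ν(V(Z)) ≤ 0)`. Averaging over `g` and swapping the integrals (Fubini on `𝒢 × Ω`), the averaged
probability is `E[F_{V(Z)}(t_{V(Z)})]`, which lies between `1 - α` and
`1 - α + E[F'_{V(Z)}(t_{V(Z)})]` because `t_{z̃}` is a `(1 - α)`-quantile of a right-continuous CDF.
-/

section LeftInvariant

variable {G : Type*} [Group G] [MeasurableSpace G] [MeasurableMul G]
  (U : Measure G) [U.IsMulLeftInvariant] [IsFiniteMeasure U] [NeZero U]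

theorem measure_inv_eq_of_measurableSet_inv_mul {A : Set G}
    (hA : MeasurableSet {p : G × G | p.2⁻¹ * p.1 ∈ A}) : U A⁻¹ = U A := by
  -- the sections of `{(h, k) | k⁻¹ * h ∈ A}` are left translates of `A⁻¹` and of `A`
  have hfst : ∀ h : G, U (Prod.mk h ⁻¹' {p : G × G | p.2⁻¹ * p.1 ∈ A}) = U A⁻¹ := fun h => by
    rw [← measure_preimage_mul U h⁻¹ A⁻¹]
    congr 1
    ext k
    simp
  have hsnd : ∀ k : G, U ((fun h => (h, k)) ⁻¹' {p : G × G | p.2⁻¹ * p.1 ∈ A}) = U A :=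
    fun k => measure_preimage_mul U k⁻¹ A
  have h := (Measure.prod_apply hA).symm.trans (Measure.prod_apply_symm (μ := U) (ν := U) hA)
  simp only [hfst, hsnd, lintegral_const] at h
  exact (ENNReal.mul_left_inj (NeZero.ne _) (measure_ne_top U _)).mp h

end LeftInvariant

section Orbit

variable {𝒢 𝒵t : Type*} [Group 𝒢] [MeasurableSpace 𝒢] [MeasurableMul 𝒢] [MeasurableInv 𝒢]
  [MeasurableSpace 𝒵t] (U : Measure 𝒢) [U.IsMulLeftInvariant] [IsFiniteMeasure U] [NeZero U]
  {ρt : 𝒢 → 𝒵t → 𝒵t}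

noncomputable def orbitLaw (U : Measure 𝒢) (ρt : 𝒢 → 𝒵t → 𝒵t) (z : 𝒵t) : Measure 𝒵t :=
  U.map fun g => ρt g z

theorem measure_act_inv_preimage (hρt_mul : ∀ g g' : 𝒢, ρt (g * g') = ρt g ∘ ρt g')
    (hρt_meas : Measurable fun p : 𝒢 × 𝒵t => ρt p.1 p.2) (z : 𝒵t) {S : Set 𝒵t}
    (hS : MeasurableSet S) :
    U ((fun h => ρt h⁻¹ z) ⁻¹' S) = U ((fun h => ρt h z) ⁻¹' S) := by
  refine measure_inv_eq_of_measurableSet_inv_mul U (A := (fun h => ρt h z) ⁻¹' S) ?_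
  have hW : Measurable fun p : 𝒢 × 𝒢 => ρt p.2⁻¹ (ρt p.1 z) :=
    hρt_meas.comp (measurable_snd.inv.prodMk (hρt_meas.of_uncurry_right.comp measurable_fst))
  convert hW hS using 1
  ext p
  simp [hρt_mul]

theorem orbitLaw_act (hρt_mul : ∀ g g' : 𝒢, ρt (g * g') = ρt g ∘ ρt g')
    (hρt_meas : Measurable fun p : 𝒢 × 𝒵t => ρt p.1 p.2) (g : 𝒢) (z : 𝒵t) :
    orbitLaw U ρt (ρt g z) = orbitLaw U ρt z := by
  ext S hS
  rw [orbitLaw, orbitLaw, Measure.map_apply hρt_meas.of_uncurry_right hS,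
    Measure.map_apply hρt_meas.of_uncurry_right hS]
  calc U ((fun h => ρt h (ρt g z)) ⁻¹' S)
      = U ((fun h => ρt h⁻¹ (ρt g z)) ⁻¹' S) :=
        (measure_act_inv_preimage U hρt_mul hρt_meas _ hS).symm
    _ = U ((fun h => g⁻¹ * h) ⁻¹' ((fun h => ρt h⁻¹ z) ⁻¹' S)) := by
        congr 1; ext h; simp [hρt_mul]
    _ = U ((fun h => ρt h z) ⁻¹' S) := by
        rw [measure_preimage_mul, measure_act_inv_preimage U hρt_mul hρt_meas _ hS]

end Orbit

section Quantile

variable (μ : Measure ℝ) {p : ℝ}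

-- valued in `EReal`, so that an empty set gives `⊤` and a set unbounded below gives `⊥`
noncomputable def lowerQuantile (μ : Measure ℝ) (p : ℝ) : EReal :=
  sInf ((↑) '' {x : ℝ | p ≤ cdf μ x})

theorem le_cdf_of_lowerQuantile_lt {y : ℝ} (hy : lowerQuantile μ p < y) : p ≤ cdf μ y := by
  obtain ⟨_, ⟨x, hx, rfl⟩, hxy⟩ := sInf_lt_iff.mp hy
  exact hx.trans ((cdf μ).mono (EReal.coe_lt_coe_iff.mp hxy).le)

theorem cdf_lt_of_lt_lowerQuantile {y : ℝ} (hy : (y : EReal) < lowerQuantile μ p) :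
    cdf μ y < p :=
  not_le.mp fun h => (sInf_le ⟨y, h, rfl⟩ : lowerQuantile μ p ≤ y).not_gt hy

theorem le_measureReal_le_lowerQuantile [IsProbabilityMeasure μ] (hp : p ≤ 1) :
    p ≤ μ.real {x : ℝ | (x : EReal) ≤ lowerQuantile μ p} := by
  induction h : lowerQuantile μ p using EReal.rec with
  | bot =>
    have hp0 : p ≤ 0 := ge_of_tendsto (tendsto_cdf_atBot μ)
      (Filter.Eventually.of_forall fun y => le_cdf_of_lowerQuantile_lt μ (h ▸ EReal.bot_lt_coe y))
    simpa using hp0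
  | coe r =>
    have hright : Filter.Tendsto (cdf μ) (nhdsWithin r (Set.Ioi r)) (nhds (cdf μ r)) :=
      ((cdf μ).right_continuous r).mono Set.Ioi_subset_Ici_self
    have hle : p ≤ cdf μ r := ge_of_tendsto hright (eventually_nhdsWithin_of_forall fun y hy =>
      le_cdf_of_lowerQuantile_lt μ (h ▸ EReal.coe_lt_coe_iff.mpr hy))
    simp only [EReal.coe_le_coe_iff]
    rwa [cdf_eq_real] at hle
  | top => simpa using hp

theorem measureReal_le_le_of_lt_lowerQuantile [IsProbabilityMeasure μ] (hp : 0 ≤ p) {t : EReal}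
    (ht : t < lowerQuantile μ p) : μ.real {x : ℝ | (x : EReal) ≤ t} ≤ p := by
  induction t using EReal.rec with
  | bot => simpa using hp
  | coe y =>
    simp only [EReal.coe_le_coe_iff]
    exact (cdf_eq_real μ y ▸ cdf_lt_of_lt_lowerQuantile μ ht).le
  | top => exact absurd ht not_top_lt

end Quantile

theorem abs_symmPIjump_le_one {𝒢 𝒵t : Type*} [MeasurableSpace 𝒢] (U : Measure 𝒢)
    [IsProbabilityMeasure U] (ρt : 𝒢 → 𝒵t → 𝒵t) (ψ : 𝒵t → ℝ) (z : 𝒵t) (t : EReal) :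
    |symmPIjump U ρt ψ z t| ≤ 1 := by
  have hleft : symmPIcdfLeft U ρt ψ z t ∈ Set.Icc (0 : ℝ) 1 :=
    ⟨Real.sSup_nonneg (by rintro _ ⟨y, -, rfl⟩; exact measureReal_nonneg),
      Real.sSup_le (by rintro _ ⟨y, -, rfl⟩; exact measureReal_le_one) zero_le_one⟩
  exact abs_sub_le_of_nonneg_of_le measureReal_nonneg measureReal_le_one hleft.1 hleft.2

section SymmPI

variable {𝒢 𝒵t : Type*} [MeasurableSpace 𝒢] [MeasurableSpace 𝒵t]
  (U : Measure 𝒢) {ρt : 𝒢 → 𝒵t → 𝒵t} {ψ : 𝒵t → ℝ}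

theorem isProbabilityMeasure_map_orbitLaw [IsProbabilityMeasure U] (hψ : Measurable ψ)
    (hρt_meas : Measurable fun p : 𝒢 × 𝒵t => ρt p.1 p.2) (z : 𝒵t) :
    IsProbabilityMeasure ((orbitLaw U ρt z).map ψ) :=
  have : IsProbabilityMeasure (orbitLaw U ρt z) :=
    Measure.isProbabilityMeasure_map hρt_meas.of_uncurry_right.aemeasurable
  Measure.isProbabilityMeasure_map hψ.aemeasurable

theorem symmPIcdfE_eq_measureReal (hψ : Measurable ψ)
    (hρt_meas : Measurable fun p : 𝒢 × 𝒵t => ρt p.1 p.2) (z : 𝒵t) (t : EReal) :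
    symmPIcdfE U ρt ψ z t = ((orbitLaw U ρt z).map ψ).real {x : ℝ | (x : EReal) ≤ t} := by
  have hS : MeasurableSet {x : ℝ | (x : EReal) ≤ t} := measurable_coe_real_ereal measurableSet_Iic
  rw [map_measureReal_apply hψ hS, orbitLaw,
    map_measureReal_apply hρt_meas.of_uncurry_right (hψ hS)]
  rfl

theorem symmPIcdf_eq_cdf_s9 [IsProbabilityMeasure U] (hψ : Measurable ψ)
    (hρt_meas : Measurable fun p : 𝒢 × 𝒵t => ρt p.1 p.2) (z : 𝒵t) :
    symmPIcdf U ρt ψ z = cdf ((orbitLaw U ρt z).map ψ) := by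
  have := isProbabilityMeasure_map_orbitLaw U hψ hρt_meas z
  ext x
  rw [cdf_eq_real, map_measureReal_apply hψ measurableSet_Iic, orbitLaw,
    map_measureReal_apply hρt_meas.of_uncurry_right (hψ measurableSet_Iic)]
  rfl

theorem symmPIthr_eq_lowerQuantile [IsProbabilityMeasure U] (hψ : Measurable ψ)
    (hρt_meas : Measurable fun p : 𝒢 × 𝒵t => ρt p.1 p.2) (α : ℝ) (z : 𝒵t) :
    symmPIthr U ρt ψ α z = lowerQuantile ((orbitLaw U ρt z).map ψ) (1 - α) := by
  rw [symmPIthr, symmPIcdf_eq_cdf_s9 U hψ hρt_meas, lowerQuantile]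

theorem one_sub_le_symmPIcdfE_symmPIthr [IsProbabilityMeasure U] (hψ : Measurable ψ)
    (hρt_meas : Measurable fun p : 𝒢 × 𝒵t => ρt p.1 p.2) {α : ℝ} (hα : 0 ≤ α) (z : 𝒵t) :
    1 - α ≤ symmPIcdfE U ρt ψ z (symmPIthr U ρt ψ α z) := by
  have := isProbabilityMeasure_map_orbitLaw U hψ hρt_meas z
  rw [symmPIcdfE_eq_measureReal U hψ hρt_meas, symmPIthr_eq_lowerQuantile U hψ hρt_meas]
  exact le_measureReal_le_lowerQuantile _ (by linarith)

theorem symmPIcdfE_symmPIthr_le [IsProbabilityMeasure U] (hψ : Measurable ψ)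
    (hρt_meas : Measurable fun p : 𝒢 × 𝒵t => ρt p.1 p.2) {α : ℝ} (hα : α ≤ 1) (z : 𝒵t) :
    symmPIcdfE U ρt ψ z (symmPIthr U ρt ψ α z)
      ≤ 1 - α + symmPIjump U ρt ψ z (symmPIthr U ρt ψ α z) := by
  have := isProbabilityMeasure_map_orbitLaw U hψ hρt_meas z
  suffices symmPIcdfLeft U ρt ψ z (symmPIthr U ρt ψ α z) ≤ 1 - α by
    rw [symmPIjump]; linarith
  refine Real.sSup_le ?_ (by linarith)
  rintro _ ⟨t, ht, rfl⟩
  rw [symmPIcdfE_eq_measureReal U hψ hρt_meas]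
  rw [symmPIthr_eq_lowerQuantile U hψ hρt_meas] at ht
  exact measureReal_le_le_of_lt_lowerQuantile _ (by linarith) ht

theorem symmPIthr_act_s9 [Group 𝒢] [MeasurableMul 𝒢] [MeasurableInv 𝒢] [U.IsMulLeftInvariant]
    [IsProbabilityMeasure U] (hψ : Measurable ψ)
    (hρt_mul : ∀ g g' : 𝒢, ρt (g * g') = ρt g ∘ ρt g')
    (hρt_meas : Measurable fun p : 𝒢 × 𝒵t => ρt p.1 p.2) (α : ℝ) (g : 𝒢) (z : 𝒵t) :
    symmPIthr U ρt ψ α (ρt g z) = symmPIthr U ρt ψ α z := by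
  rw [symmPIthr_eq_lowerQuantile U hψ hρt_meas, symmPIthr_eq_lowerQuantile U hψ hρt_meas,
    orbitLaw_act U hρt_mul hρt_meas]

end SymmPI

section TotalVariation

variable {β : Type*} [MeasurableSpace β] (μ ν : Measure β) [IsZeroOrProbabilityMeasure μ]
  [IsZeroOrProbabilityMeasure ν]

theorem abs_measureReal_sub_le_TVdist {A : Set β} (hA : MeasurableSet A) :
    |μ.real A - ν.real A| ≤ TVdist μ ν :=
  le_ciSup (f := fun A : {A : Set β // MeasurableSet A} => |μ.real A.1 - ν.real A.1|)
    ⟨1, by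
      rintro _ ⟨B, rfl⟩
      exact abs_sub_le_of_nonneg_of_le measureReal_nonneg measureReal_le_one measureReal_nonneg
        measureReal_le_one⟩ ⟨A, hA⟩

theorem TVdist_nonneg : 0 ≤ TVdist μ ν :=
  (abs_nonneg _).trans (abs_measureReal_sub_le_TVdist μ ν MeasurableSet.empty)

theorem TVdist_le_one : TVdist μ ν ≤ 1 :=
  have : Nonempty {A : Set β // MeasurableSet A} := ⟨⟨∅, .empty⟩⟩
  ciSup_le fun _ => abs_sub_le_of_nonneg_of_le measureReal_nonneg measureReal_le_one
    measureReal_nonneg measureReal_le_one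

theorem abs_measureReal_preimage_sub_le_TVdist_map {Ω : Type*} [MeasurableSpace Ω]
    (P : Measure Ω) [IsZeroOrProbabilityMeasure P] {X Y : Ω → β} (hX : Measurable X)
    (hY : Measurable Y) {A : Set β} (hA : MeasurableSet A) :
    |P.real (X ⁻¹' A) - P.real (Y ⁻¹' A)| ≤ TVdist (P.map X) (P.map Y) := by
  rw [← map_measureReal_apply hX hA, ← map_measureReal_apply hY hA]
  exact abs_measureReal_sub_le_TVdist _ _ hA

end TotalVariation

section Integrals

variable {α : Type*} [MeasurableSpace α] {μ : Measure α} [IsProbabilityMeasure μ] {f : α → ℝ}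

theorem abs_sub_integral_le_integral_of_abs_sub_le {D : α → ℝ} {c : ℝ} (hf : Integrable f μ)
    (hD : Integrable D μ) (h : ∀ x, |c - f x| ≤ D x) : |c - ∫ x, f x ∂μ| ≤ ∫ x, D x ∂μ :=
  calc |c - ∫ x, f x ∂μ| = |∫ x, (c - f x) ∂μ| := by
        rw [integral_sub (integrable_const c) hf, integral_const, probReal_univ, one_smul]
    _ ≤ ∫ x, |c - f x| ∂μ := abs_integral_le_integral_abs
    _ ≤ ∫ x, D x ∂μ := integral_mono ((integrable_const c).sub hf).abs hD h

theorem le_integral_le_add_integral_of_forall {j : α → ℝ} {c : ℝ} (hf : Integrable f μ)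
    (hj : Integrable j μ) (hlow : ∀ x, c ≤ f x) (hhigh : ∀ x, f x ≤ c + j x) :
    c ≤ ∫ x, f x ∂μ ∧ ∫ x, f x ∂μ ≤ c + ∫ x, j x ∂μ := by
  constructor
  · simpa using integral_mono (integrable_const c) hf hlow
  · have h : ∫ x, f x ∂μ ≤ ∫ x, (c + j x) ∂μ := integral_mono hf ((integrable_const c).add hj) hhigh
    rwa [integral_add (integrable_const c) hj, integral_const, probReal_univ, one_smul] at h

end Integrals

section Fubini

variable {Ω 𝒢 𝒵t : Type*} [MeasurableSpace Ω] [MeasurableSpace 𝒢] [MeasurableSpace 𝒵t]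
  (P : Measure Ω) [IsProbabilityMeasure P] (U : Measure 𝒢) [IsProbabilityMeasure U]
  {ρt : 𝒢 → 𝒵t → 𝒵t} {ψ : 𝒵t → ℝ} {X : Ω → 𝒵t} {T : Ω → EReal}

theorem measurableSet_coe_act_le (hψ : Measurable ψ)
    (hρt_meas : Measurable fun p : 𝒢 × 𝒵t => ρt p.1 p.2) (hX : Measurable X)
    (hT : Measurable T) : MeasurableSet {p : 𝒢 × Ω | (ψ (ρt p.1 (X p.2)) : EReal) ≤ T p.2} :=
  measurableSet_le (measurable_coe_real_ereal.comp
    (hψ.comp (hρt_meas.comp (measurable_fst.prodMk (hX.comp measurable_snd)))))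
    (hT.comp measurable_snd)

theorem integral_symmPIcdfE_eq_integral_measureReal (hψ : Measurable ψ)
    (hρt_meas : Measurable fun p : 𝒢 × 𝒵t => ρt p.1 p.2) (hX : Measurable X)
    (hT : Measurable T) :
    ∫ ω, symmPIcdfE U ρt ψ (X ω) (T ω) ∂P
      = ∫ g, P.real {ω | (ψ (ρt g (X ω)) : EReal) ≤ T ω} ∂U := by
  have hW := measurableSet_coe_act_le hψ hρt_meas hX hT
  calc ∫ ω, symmPIcdfE U ρt ψ (X ω) (T ω) ∂P
      = ((U.prod P) {p : 𝒢 × Ω | (ψ (ρt p.1 (X p.2)) : EReal) ≤ T p.2}).toReal := by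
        rw [Measure.prod_apply_symm hW, ← integral_toReal
          (measurable_measure_prodMk_right hW).aemeasurable
          (ae_of_all _ fun _ => measure_lt_top _ _)]
        rfl
    _ = ∫ g, P.real {ω | (ψ (ρt g (X ω)) : EReal) ≤ T ω} ∂U := by
        rw [Measure.prod_apply hW, ← integral_toReal
          (measurable_measure_prodMk_left hW).aemeasurable
          (ae_of_all _ fun _ => measure_lt_top _ _)]
        rfl

theorem integrable_symmPIcdfE (hψ : Measurable ψ)
    (hρt_meas : Measurable fun p : 𝒢 × 𝒵t => ρt p.1 p.2) (hX : Measurable X)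
    (hT : Measurable T) : Integrable (fun ω => symmPIcdfE U ρt ψ (X ω) (T ω)) P :=
  .of_bound (measurable_measure_prodMk_right
      (measurableSet_coe_act_le hψ hρt_meas hX hT)).ennreal_toReal.aestronglyMeasurable 1
    (ae_of_all _ fun _ => (Real.norm_of_nonneg measureReal_nonneg).trans_le measureReal_le_one)

theorem integrable_measureReal_coe_act_le (hψ : Measurable ψ)
    (hρt_meas : Measurable fun p : 𝒢 × 𝒵t => ρt p.1 p.2) (hX : Measurable X)
    (hT : Measurable T) :
    Integrable (fun g => P.real {ω | (ψ (ρt g (X ω)) : EReal) ≤ T ω}) U :=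
  .of_bound (measurable_measure_prodMk_left
      (measurableSet_coe_act_le hψ hρt_meas hX hT)).ennreal_toReal.aestronglyMeasurable 1
    (ae_of_all _ fun _ => (Real.norm_of_nonneg measureReal_nonneg).trans_le measureReal_le_one)

end Fubini

theorem stmt9_general
    {Ω 𝒢 𝒵 𝒵t : Type*} [MeasurableSpace Ω] [MeasurableSpace 𝒢] [MeasurableSpace 𝒵]
    [MeasurableSpace 𝒵t]
    [Group 𝒢] [TopologicalSpace 𝒢] [IsTopologicalGroup 𝒢]
    [BorelSpace 𝒢]
    (P : Measure Ω) [IsProbabilityMeasure P]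
    (U : Measure 𝒢) [IsProbabilityMeasure U]
    (hU : ∀ g : 𝒢, Measure.map (fun h => g * h) U = U)
    (ρt : 𝒢 → 𝒵t → 𝒵t)
    (hρt_mul : ∀ g g' : 𝒢, ρt (g * g') = ρt g ∘ ρt g')
    (hρt_meas : Measurable (fun p : 𝒢 × 𝒵t => ρt p.1 p.2))
    (V : 𝒵 → 𝒵t) (hV : Measurable V)
    (ψ : 𝒵t → ℝ) (hψ : Measurable ψ)
    (α : ℝ) (hα : α ∈ Set.Icc (0 : ℝ) 1)
    (ht_meas : Measurable (fun z : 𝒵t => symmPIthr U ρt ψ α z))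
    (hjump_meas : Measurable (fun z : 𝒵t => symmPIjump U ρt ψ z (symmPIthr U ρt ψ α z)))
    -- the "score-minus-threshold" function ν(z̃) = ψ(z̃) − t_{z̃}, and its measurability
    (ν : 𝒵t → EReal) (hν_def : ∀ z : 𝒵t, ν z = (ψ z : EReal) - symmPIthr U ρt ψ α z)
    (hν_meas : Measurable ν)
    (Zv : Ω → 𝒵) (hZ : Measurable Zv)
    (hTV_meas : Measurable (fun g : 𝒢 =>
      TVdist (Measure.map (fun ω => ν (V (Zv ω))) P)
        (Measure.map (fun ω => ν (ρt g (V (Zv ω)))) P))) :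
    -(∫ g, TVdist (Measure.map (fun ω => ν (V (Zv ω))) P)
          (Measure.map (fun ω => ν (ρt g (V (Zv ω)))) P) ∂U)
      ≤ (P {ω | (ψ (V (Zv ω)) : EReal) ≤ symmPIthr U ρt ψ α (V (Zv ω))}).toReal - (1 - α) ∧
    (P {ω | (ψ (V (Zv ω)) : EReal) ≤ symmPIthr U ρt ψ α (V (Zv ω))}).toReal - (1 - α)
      ≤ (∫ g, TVdist (Measure.map (fun ω => ν (V (Zv ω))) P)
            (Measure.map (fun ω => ν (ρt g (V (Zv ω)))) P) ∂U)
        + ∫ ω, symmPIjump U ρt ψ (V (Zv ω)) (symmPIthr U ρt ψ α (V (Zv ω))) ∂P := by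
  have : U.IsMulLeftInvariant := ⟨hU⟩
  have hX : Measurable fun ω => V (Zv ω) := hV.comp hZ
  have hT : Measurable fun ω => symmPIthr U ρt ψ α (V (Zv ω)) := ht_meas.comp hX
  have hν_nonpos (z : 𝒵t) : ν z ≤ 0 ↔ (ψ z : EReal) ≤ symmPIthr U ρt ψ α z := by
    rw [hν_def, EReal.sub_nonpos]
  -- `t` is constant on orbits, so the event `ψ(ρ̃(g)V(Z)) ≤ t_{V(Z)}` is `ν(ρ̃(g)V(Z)) ≤ 0`
  have hshift (g : 𝒢) :
      |P.real {ω | (ψ (V (Zv ω)) : EReal) ≤ symmPIthr U ρt ψ α (V (Zv ω))}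
        - P.real {ω | (ψ (ρt g (V (Zv ω))) : EReal) ≤ symmPIthr U ρt ψ α (V (Zv ω))}|
      ≤ TVdist (P.map fun ω => ν (V (Zv ω))) (P.map fun ω => ν (ρt g (V (Zv ω)))) := by
    simpa only [Set.preimage, Set.mem_Iic, hν_nonpos, symmPIthr_act_s9 U hψ hρt_mul hρt_meas] using
      abs_measureReal_preimage_sub_le_TVdist_map P (X := fun ω => ν (V (Zv ω)))
        (Y := fun ω => ν (ρt g (V (Zv ω)))) (hν_meas.comp hX)
        (hν_meas.comp (hρt_meas.of_uncurry_left.comp hX)) (measurableSet_Iic (a := (0 : EReal)))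
  have hcov := abs_sub_integral_le_integral_of_abs_sub_le
    (integrable_measureReal_coe_act_le P U hψ hρt_meas hX hT)
    (.of_bound hTV_meas.aestronglyMeasurable 1 (ae_of_all _ fun g =>
      (Real.norm_of_nonneg (TVdist_nonneg _ _)).trans_le (TVdist_le_one _ _))) hshift
  rw [← integral_symmPIcdfE_eq_integral_measureReal P U hψ hρt_meas hX hT, abs_le,
    measureReal_def] at hcov
  obtain ⟨hlow, hhigh⟩ := le_integral_le_add_integral_of_forall
    (integrable_symmPIcdfE P U hψ hρt_meas hX hT)
    (j := fun ω => symmPIjump U ρt ψ (V (Zv ω)) (symmPIthr U ρt ψ α (V (Zv ω))))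
    (.of_bound (hjump_meas.comp hX).aestronglyMeasurable 1
      (ae_of_all _ fun _ => abs_symmPIjump_le_one U ρt ψ _ _))
    (fun ω => one_sub_le_symmPIcdfE_symmPIthr U hψ hρt_meas hα.1 (V (Zv ω)))
    (fun ω => symmPIcdfE_symmPIthr_le U hψ hρt_meas hα.2 (V (Zv ω)))
  exact ⟨by linarith [hcov.1], by linarith [hcov.2]⟩

/-- coverage under distribution shift: for an arbitrary random element `Z`
and arbitrary measurable `V`, with `ν(z̃) = ψ(z̃) − t_{z̃}` and
`Δ = ∫_𝒢 TV(ν(V(Z)), ν(ρ̃(g)V(Z))) dU(g)`,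
`−Δ ≤ P(ψ(V(Z)) ≤ t_{V(Z)}) − (1 − α) ≤ Δ + E[F'_{V(Z)}(t_{V(Z)})]`. -/
theorem stmt9
    {Ω 𝒢 𝒵 𝒵t : Type*} [MeasurableSpace Ω] [MeasurableSpace 𝒢] [MeasurableSpace 𝒵]
    [MeasurableSpace 𝒵t]
    [Group 𝒢] [TopologicalSpace 𝒢] [IsTopologicalGroup 𝒢] [CompactSpace 𝒢] [T2Space 𝒢]
    [BorelSpace 𝒢]
    (P : Measure Ω) [IsProbabilityMeasure P]
    (U : Measure 𝒢) [IsProbabilityMeasure U]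
    (hU : ∀ g : 𝒢, Measure.map (fun h => g * h) U = U)
    (ρ : 𝒢 → 𝒵 → 𝒵)
    (hρ_one : ρ 1 = id)
    (hρ_mul : ∀ g g' : 𝒢, ρ (g * g') = ρ g ∘ ρ g')
    (hρ_meas : Measurable (fun p : 𝒢 × 𝒵 => ρ p.1 p.2))
    (ρt : 𝒢 → 𝒵t → 𝒵t)
    (hρt_one : ρt 1 = id)
    (hρt_mul : ∀ g g' : 𝒢, ρt (g * g') = ρt g ∘ ρt g')
    (hρt_meas : Measurable (fun p : 𝒢 × 𝒵t => ρt p.1 p.2))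
    (V : 𝒵 → 𝒵t) (hV : Measurable V)
    (ψ : 𝒵t → ℝ) (hψ : Measurable ψ)
    (hψρ : Measurable (fun p : 𝒢 × 𝒵t => ψ (ρt p.1 p.2)))
    (α : ℝ) (hα : α ∈ Set.Icc (0 : ℝ) 1)
    (ht_meas : Measurable (fun z : 𝒵t => symmPIthr U ρt ψ α z))
    (hjump_meas : Measurable (fun z : 𝒵t => symmPIjump U ρt ψ z (symmPIthr U ρt ψ α z)))
    -- the "score-minus-threshold" function ν(z̃) = ψ(z̃) − t_{z̃}, and its measurability
    (ν : 𝒵t → EReal) (hν_def : ∀ z : 𝒵t, ν z = (ψ z : EReal) - symmPIthr U ρt ψ α z)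
    (hν_meas : Measurable ν)
    (Zv : Ω → 𝒵) (hZ : Measurable Zv)
    (hTV_meas : Measurable (fun g : 𝒢 =>
      TVdist (Measure.map (fun ω => ν (V (Zv ω))) P)
        (Measure.map (fun ω => ν (ρt g (V (Zv ω)))) P))) :
    -(∫ g, TVdist (Measure.map (fun ω => ν (V (Zv ω))) P)
          (Measure.map (fun ω => ν (ρt g (V (Zv ω)))) P) ∂U)
      ≤ (P {ω | (ψ (V (Zv ω)) : EReal) ≤ symmPIthr U ρt ψ α (V (Zv ω))}).toReal - (1 - α) ∧
    (P {ω | (ψ (V (Zv ω)) : EReal) ≤ symmPIthr U ρt ψ α (V (Zv ω))}).toReal - (1 - α)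
      ≤ (∫ g, TVdist (Measure.map (fun ω => ν (V (Zv ω))) P)
            (Measure.map (fun ω => ν (ρt g (V (Zv ω)))) P) ∂U)
        + ∫ ω, symmPIjump U ρt ψ (V (Zv ω)) (symmPIthr U ρt ψ α (V (Zv ω))) ∂P :=
  stmt9_general P U hU ρt hρt_mul hρt_meas V hV ψ hψ α hα ht_meas hjump_meas ν hν_def hν_meas Zv hZ
    hTV_meas
end
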